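/- arXiv:2306.15583 — 3 statements merged into one kernel-verified Lean document; each statement's English description precedes it below -/
import Mathlib

section
/- Any subset A of the circle 𝕋¹ = ℝ/2πℤ is connected if and only if its complement 𝕋¹ \ A is connected. -/
/-!
Removing a point `a ∉ A` cuts the circle into the open arc `(a, a + p)`, on which the covering map
`ℝ → AddCircle p` is a homeomorphism onto its image. A preconnected `A` therefore lifts to an
interval `t ⊆ (a, a + p)`, and `Aᶜ` is the image of `[a, a + p] \ t`. The latter is the union of
the part of `[a, a + p]` below `t` and the part above it, two intervals whose images share the
point `a = a + p` of the circle. Applying this to `Aᶜ` gives the converse.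
-/

open Set

theorem Set.OrdConnected.diff_eq_union {α : Type*} [LinearOrder α] {s t : Set α}
    (ht : t.OrdConnected) :
    s \ t = (s ∩ ⋂ b ∈ t, Iio b) ∪ (s ∩ ⋂ b ∈ t, Ioi b) := by
  ext x
  simp only [mem_sdiff, mem_union, mem_inter_iff, mem_iInter, mem_Iio, mem_Ioi]
  refine ⟨fun ⟨hxs, hxt⟩ => ?_, ?_⟩
  · by_contra! h
    obtain ⟨b, hb, hbx⟩ := h.1 hxs
    obtain ⟨c, hc, hxc⟩ := h.2 hxs
    exact hxt (ht.out hb hc ⟨hbx, hxc⟩)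
  · rintro (⟨hxs, hx⟩ | ⟨hxs, hx⟩) <;> refine ⟨hxs, fun hxt => lt_irrefl x ?_⟩
    exacts [hx x hxt, hx x hxt]

namespace AddCircle

variable {p : ℝ} [Fact (0 < p)] {A : Set (AddCircle p)} {a : ℝ}

theorem isPreconnected_Ioo_inter_preimage (ha : (a : AddCircle p) ∉ A)
    (hA : IsPreconnected A) : IsPreconnected (Ioo a (a + p) ∩ (↑) ⁻¹' A) := by
  let φ := openPartialHomeomorphCoe p a
  have hAφ : A ⊆ φ.target := fun x hx (hxa : x = a) => ha (hxa ▸ hx)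
  have hlift : φ.symm '' A = Ioo a (a + p) ∩ (↑) ⁻¹' A :=
    φ.symm_image_eq_source_inter_preimage hAφ
  exact hlift ▸ hA.image _ (φ.continuousOn_symm.mono hAφ)

theorem compl_eq_image_Icc_diff (ha : (a : AddCircle p) ∉ A) :
    Aᶜ = (↑) '' (Icc a (a + p) \ (Ioo a (a + p) ∩ (↑) ⁻¹' A)) := by
  have hends :
      Icc a (a + p) \ (Ioo a (a + p) ∩ (↑) ⁻¹' A) = Icc a (a + p) ∩ (↑) ⁻¹' Aᶜ := by
    ext x
    simp only [mem_sdiff, mem_inter_iff, mem_preimage, mem_compl_iff, not_and]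
    refine ⟨fun ⟨hx, hxA⟩ => ⟨hx, fun hA => ?_⟩, fun ⟨hx, hxA⟩ => ⟨hx, fun _ => hxA⟩⟩
    rcases eq_endpoints_or_mem_Ioo_of_mem_Icc hx with rfl | rfl | hx'
    exacts [ha hA, ha (coe_add_period p a ▸ hA), hxA hx' hA]
  rw [hends, image_inter_preimage, coe_image_Icc_eq, univ_inter]

theorem isPreconnected_compl_of_coe_notMem (ha : (a : AddCircle p) ∉ A)
    (hA : IsPreconnected A) : IsPreconnected Aᶜ := by
  set t := Ioo a (a + p) ∩ (↑) ⁻¹' A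
  have hpiece : ∀ u : Set ℝ, u.OrdConnected →
      IsPreconnected (((↑) : ℝ → AddCircle p) '' (Icc a (a + p) ∩ u)) := fun u hu =>
    (ordConnected_Icc.inter hu).isPreconnected.image _ (AddCircle.continuous_mk' p).continuousOn
  have hle : a ≤ a + p := le_add_of_nonneg_right (Fact.out : 0 < p).le
  have ha_low : a ∈ Icc a (a + p) ∩ ⋂ b ∈ t, Iio b :=
    ⟨left_mem_Icc.2 hle, mem_iInter₂.2 fun _ hb => hb.1.1⟩
  have hap_high : a + p ∈ Icc a (a + p) ∩ ⋂ b ∈ t, Ioi b :=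
    ⟨right_mem_Icc.2 hle, mem_iInter₂.2 fun _ hb => hb.1.2⟩
  rw [compl_eq_image_Icc_diff ha,
    (isPreconnected_Ioo_inter_preimage ha hA).ordConnected.diff_eq_union, image_union]
  exact IsPreconnected.union (a : AddCircle p) (mem_image_of_mem _ ha_low)
    ⟨a + p, hap_high, coe_add_period p a⟩
    (hpiece _ (ordConnected_biInter fun _ _ => ordConnected_Iio))
    (hpiece _ (ordConnected_biInter fun _ _ => ordConnected_Ioi))

theorem isPreconnected_compl (hA : IsPreconnected A) : IsPreconnected Aᶜ := by
  rcases Aᶜ.eq_empty_or_nonempty with h | ⟨q, hq⟩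
  · exact h ▸ isPreconnected_empty
  · induction q using QuotientAddGroup.induction_on with
    | H a => exact isPreconnected_compl_of_coe_notMem hq hA

end AddCircle

/-- a subset of the circle is connected iff its complement is connected
(where the empty set counts as connected, i.e. we use preconnectedness). -/
theorem stmt3 (A : Set (AddCircle (2 * Real.pi))) :
    IsPreconnected A ↔ IsPreconnected Aᶜ := by
  have : Fact (0 < 2 * Real.pi) := ⟨by positivity⟩
  exact ⟨AddCircle.isPreconnected_compl,
    fun h => compl_compl A ▸ AddCircle.isPreconnected_compl h⟩
end

section
/- Let g, h ∈ C^∞(𝕋¹) be ℝ-linearly independent real-valued functions. Then there exist nonzero integers p₁ ≠ p₂ such that the function t ↦ p₁g(t) + p₂h(t) changes sign on 𝕋¹ (i.e., takes both strictly positive and strictly negative values). Moreover, if ∫₀^{2π} g ≠ 0 or ∫₀^{2π} h ≠ 0, then p₁, p₂ may be chosen so that additionally ∫₀^{2π} (p₁g(t) + p₂h(t)) dt ≠ 0. -/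
set_option maxHeartbeats 1000000

open Real MeasureTheory intervalIntegral Set

private lemma indep_coeffs {g h : ℝ → ℝ} (hli : LinearIndependent ℝ ![g, h])
    {c d : ℝ} (hcd : ∀ t, c * g t + d * h t = 0) : c = 0 ∧ d = 0 := by
  have H := Fintype.linearIndependent_iff.mp hli ![c, d]
  have h0 : (∑ i, ![c, d] i • ![g, h] i) = 0 := by
    funext t
    have := hcd t
    simp only [Fin.sum_univ_two, Matrix.cons_val_zero, Matrix.cons_val_one, Matrix.head_cons,
      Pi.add_apply, Pi.smul_apply, smul_eq_mul, Pi.zero_apply]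
    linarith
  exact ⟨H h0 0, H h0 1⟩

private lemma eq_zero_of_nonneg {φ : ℝ → ℝ} (hc : Continuous φ)
    (hper : Function.Periodic φ (2 * Real.pi)) (h0 : ∀ t, 0 ≤ φ t)
    (hint : (∫ t in (0:ℝ)..(2 * Real.pi), φ t) = 0) : ∀ t, φ t = 0 := by
  have h2pi : (0:ℝ) < 2 * Real.pi := by positivity
  have hae : φ =ᵐ[volume.restrict (Ioc (0:ℝ) (2 * Real.pi))] 0 := by
    refine (integral_eq_zero_iff_of_le_of_nonneg_ae h2pi.le ?_ (hc.intervalIntegrable _ _)).mp hint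
    exact Filter.Eventually.of_forall h0
  have heq : EqOn φ 0 (Ioc (0:ℝ) (2 * Real.pi)) :=
    Measure.eqOn_Ioc_of_ae_eq volume hae hc.continuousOn continuousOn_const
  intro t
  obtain ⟨y, hy, hty⟩ := hper.exists_mem_Ioc h2pi t 0
  rw [hty]
  simpa using heq (by simpa using hy)

private lemma sign_change {φ : ℝ → ℝ} (hc : Continuous φ)
    (hper : Function.Periodic φ (2 * Real.pi)) (hne : ∃ t, φ t ≠ 0)
    (hint : (∫ t in (0:ℝ)..(2 * Real.pi), φ t) = 0) :
    (∃ t₁, 0 < φ t₁) ∧ (∃ t₂, φ t₂ < 0) := by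
  constructor
  · by_contra hpos
    push_neg at hpos
    have := eq_zero_of_nonneg (φ := fun t => -φ t) (hc.neg)
      (fun t => by simp [hper t]) (fun t => by simpa using hpos t)
      (by rw [intervalIntegral.integral_neg, hint, neg_zero])
    obtain ⟨t, ht⟩ := hne
    exact ht (by have := this t; simpa using this)
  · by_contra hneg
    push_neg at hneg
    have := eq_zero_of_nonneg hc hper hneg hint
    obtain ⟨t, ht⟩ := hne
    exact ht (this t)

private lemma exists_rat_avoid (F : Finset ℝ) :
    ∀ a b : ℝ, a < b → ∃ q : ℚ, a < (q:ℝ) ∧ (q:ℝ) < b ∧ (q:ℝ) ∉ F := by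
  classical
  induction F using Finset.strongInductionOn with
  | _ F ih =>
    intro a b hab
    obtain ⟨q, hq1, hq2⟩ := exists_rat_btwn hab
    by_cases hqF : (q:ℝ) ∈ F
    · obtain ⟨q', h1, h2, h3⟩ := ih (F.erase (q:ℝ)) (Finset.erase_ssubset hqF) a q hq1
      exact ⟨q', h1, h2.trans hq2, fun hm => h3 (Finset.mem_erase.mpr ⟨ne_of_lt h2, hm⟩)⟩
    · exact ⟨q, hq1, hq2, hqF⟩

private lemma rat_num_cast_eq (q : ℚ) : ((q.num : ℝ)) = (q : ℝ) * (q.den : ℝ) := by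
  rw [Rat.cast_def]
  field_simp

/-- for ℝ-linearly independent real functions `g, h` on the torus there are
nonzero distinct integers `p₁ ≠ p₂` with `p₁ g + p₂ h` changing sign; moreover if one of
the means is nonzero the combination can also be chosen with nonzero mean. -/
theorem stmt5 (g h : ℝ → ℝ) (hg : ContDiff ℝ (⊤ : ℕ∞) g) (hh : ContDiff ℝ (⊤ : ℕ∞) h)
    (hgper : Function.Periodic g (2 * Real.pi))
    (hhper : Function.Periodic h (2 * Real.pi))
    (hli : LinearIndependent ℝ ![g, h]) :
    (∃ p₁ p₂ : ℤ, p₁ ≠ 0 ∧ p₂ ≠ 0 ∧ p₁ ≠ p₂ ∧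
      (∃ t₁, 0 < (p₁ : ℝ) * g t₁ + (p₂ : ℝ) * h t₁) ∧
      (∃ t₂, (p₁ : ℝ) * g t₂ + (p₂ : ℝ) * h t₂ < 0)) ∧
    (((∫ t in (0:ℝ)..(2 * Real.pi), g t) ≠ 0 ∨
        (∫ t in (0:ℝ)..(2 * Real.pi), h t) ≠ 0) →
      ∃ p₁ p₂ : ℤ, p₁ ≠ 0 ∧ p₂ ≠ 0 ∧ p₁ ≠ p₂ ∧
        (∃ t₁, 0 < (p₁ : ℝ) * g t₁ + (p₂ : ℝ) * h t₁) ∧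
        (∃ t₂, (p₁ : ℝ) * g t₂ + (p₂ : ℝ) * h t₂ < 0) ∧
        (∫ t in (0:ℝ)..(2 * Real.pi), ((p₁ : ℝ) * g t + (p₂ : ℝ) * h t)) ≠ 0) := by
  classical
  have hgc : Continuous g := hg.continuous
  have hhc : Continuous h := hh.continuous
  set A := ∫ t in (0:ℝ)..(2 * Real.pi), g t with hA
  set B := ∫ t in (0:ℝ)..(2 * Real.pi), h t with hB
  have hcombo : ∀ x y : ℝ,
      (∫ t in (0:ℝ)..(2 * Real.pi), (x * g t + y * h t)) = x * A + y * B := by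
    intro x y
    rw [intervalIntegral.integral_add ((hgc.intervalIntegrable _ _).const_mul x)
      ((hhc.intervalIntegrable _ _).const_mul y),
      intervalIntegral.integral_const_mul, intervalIntegral.integral_const_mul]
  have hcomboC : ∀ x y : ℝ, Continuous (fun t => x * g t + y * h t) := fun x y =>
    ((continuous_const.mul hgc).add (continuous_const.mul hhc))
  have hcomboP : ∀ x y : ℝ, Function.Periodic (fun t => x * g t + y * h t) (2 * Real.pi) :=
    fun x y t => by simp [hgper t, hhper t]
  have hcomboNe : ∀ x y : ℝ, (x ≠ 0 ∨ y ≠ 0) → ∃ t, x * g t + y * h t ≠ 0 := by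
    intro x y hxy
    by_contra hcon
    push_neg at hcon
    obtain ⟨hx0, hy0⟩ := indep_coeffs hli hcon
    rcases hxy with hx | hy
    · exact hx hx0
    · exact hy hy0
  -- main construction for the case (A, B) ≠ (0, 0)
  have main : ¬(A = 0 ∧ B = 0) →
      ∃ p₁ p₂ : ℤ, p₁ ≠ 0 ∧ p₂ ≠ 0 ∧ p₁ ≠ p₂ ∧
        (∃ t₁, 0 < (p₁ : ℝ) * g t₁ + (p₂ : ℝ) * h t₁) ∧
        (∃ t₂, (p₁ : ℝ) * g t₂ + (p₂ : ℝ) * h t₂ < 0) ∧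
        (∫ t in (0:ℝ)..(2 * Real.pi), ((p₁ : ℝ) * g t + (p₂ : ℝ) * h t)) ≠ 0 := by
    intro hAB
    have hBnA : B ≠ 0 ∨ -A ≠ 0 := by
      by_contra hcon
      push_neg at hcon
      exact hAB ⟨by linarith [hcon.2], hcon.1⟩
    obtain ⟨⟨t₁, ht₁⟩, ⟨t₂, ht₂⟩⟩ := sign_change (hcomboC B (-A)) (hcomboP B (-A))
      (hcomboNe B (-A) hBnA) (by rw [hcombo]; ring)

    set c₁ : ℝ := B * g t₁ + (-A) * h t₁ with hc₁
    set c₂ : ℝ := -(B * g t₂ + (-A) * h t₂) with hc₂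
    have hc₁pos : 0 < c₁ := ht₁
    have hc₂pos : 0 < c₂ := by simp only [hc₂]; linarith
    set M : ℝ := |g t₁| + |h t₁| + |g t₂| + |h t₂| + 1 with hM
    have hMpos : 0 < M := by positivity
    set δ : ℝ := min c₁ c₂ / M with hδ
    have hδpos : 0 < δ := div_pos (lt_min hc₁pos hc₂pos) hMpos
    have hδM : δ * M = min c₁ c₂ := div_mul_cancel₀ _ (ne_of_gt hMpos)
    obtain ⟨q₁, hq₁l, hq₁r, hq₁F⟩ := exists_rat_avoid {(0:ℝ)} B (B + δ) (by linarith)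
    have hq₁0 : (q₁:ℝ) ≠ 0 := by simpa using hq₁F
    obtain ⟨q₂, hq₂l, hq₂r, hq₂F⟩ :=
      exists_rat_avoid {(0:ℝ), (q₁:ℝ), -(q₁:ℝ) * A / B} (-A) (-A + δ) (by linarith)
    simp only [Finset.mem_insert, Finset.mem_singleton, not_or] at hq₂F
    obtain ⟨hq₂0, hq₂q₁, hq₂line⟩ := hq₂F
    have habs : ∀ u v w : ℝ, |v| ≤ w → 0 ≤ u → u < δ → -(δ * w) ≤ u * v := by
      intro u v w hvw hu huδ
      have h1 : |u * v| ≤ δ * w := by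
        rw [abs_mul]
        exact mul_le_mul (le_of_lt (by rwa [abs_of_nonneg hu])) hvw (abs_nonneg v)
          (le_of_lt hδpos)
      linarith [neg_abs_le (u * v)]
    have hs₁ : 0 < (q₁:ℝ) * g t₁ + (q₂:ℝ) * h t₁ := by
      have e1 : -(δ * |g t₁|) ≤ ((q₁:ℝ) - B) * g t₁ :=
        habs _ _ _ le_rfl (by linarith) (by linarith)
      have e2 : -(δ * |h t₁|) ≤ ((q₂:ℝ) - (-A)) * h t₁ :=
        habs _ _ _ le_rfl (by linarith) (by linarith)
      have emin : min c₁ c₂ ≤ c₁ := min_le_left _ _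
      nlinarith [hδpos, abs_nonneg (g t₂), abs_nonneg (h t₂)]
    have habs2 : ∀ u v w : ℝ, |v| ≤ w → 0 ≤ u → u < δ → u * v ≤ δ * w := by
      intro u v w hvw hu huδ
      have h1 : |u * v| ≤ δ * w := by
        rw [abs_mul]
        exact mul_le_mul (le_of_lt (by rwa [abs_of_nonneg hu])) hvw (abs_nonneg v)
          (le_of_lt hδpos)
      linarith [le_abs_self (u * v)]
    have hs₂ : (q₁:ℝ) * g t₂ + (q₂:ℝ) * h t₂ < 0 := by
      have e1 : ((q₁:ℝ) - B) * g t₂ ≤ δ * |g t₂| :=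
        habs2 _ _ _ le_rfl (by linarith) (by linarith)
      have e2 : ((q₂:ℝ) - (-A)) * h t₂ ≤ δ * |h t₂| :=
        habs2 _ _ _ le_rfl (by linarith) (by linarith)
      have emin : min c₁ c₂ ≤ c₂ := min_le_right _ _
      nlinarith [hδpos, abs_nonneg (g t₁), abs_nonneg (h t₁)]
    have hline : (q₁:ℝ) * A + (q₂:ℝ) * B ≠ 0 := by
      by_cases hB0 : B = 0
      · have hA0 : A ≠ 0 := fun hA0 => hAB ⟨hA0, hB0⟩
        rw [hB0]
        simpa using mul_ne_zero hq₁0 hA0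
      · intro hcon
        apply hq₂line
        field_simp
        linarith
    -- clear denominators
    have hd₁ : ((q₁.den : ℝ)) ≠ 0 := by positivity
    have hd₂ : ((q₂.den : ℝ)) ≠ 0 := by positivity
    set N : ℝ := ((q₁.den : ℝ) * (q₂.den : ℝ)) with hN
    have hNpos : 0 < N := by positivity
    have hP₁ : ((q₁.num * (q₂.den : ℤ) : ℤ) : ℝ) = (q₁:ℝ) * N := by
      push_cast
      rw [rat_num_cast_eq q₁, hN]
      ring
    have hP₂ : ((q₂.num * (q₁.den : ℤ) : ℤ) : ℝ) = (q₂:ℝ) * N := by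
      push_cast
      rw [rat_num_cast_eq q₂, hN]
      ring
    refine ⟨q₁.num * (q₂.den : ℤ), q₂.num * (q₁.den : ℤ), ?_, ?_, ?_, ⟨t₁, ?_⟩, ⟨t₂, ?_⟩, ?_⟩
    · exact mul_ne_zero (Rat.num_ne_zero.mpr (fun hz => hq₁0 (by simp [hz])))
        (by exact_mod_cast q₂.den_nz)
    · exact mul_ne_zero (Rat.num_ne_zero.mpr (fun hz => hq₂0 (by simp [hz])))
        (by exact_mod_cast q₁.den_nz)
    · intro hcon
      apply hq₂q₁
      have : (q₁:ℝ) * N = (q₂:ℝ) * N := by rw [← hP₁, ← hP₂, hcon]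
      have := mul_right_cancel₀ (ne_of_gt hNpos) this
      exact this.symm
    · rw [hP₁, hP₂, show (q₁:ℝ) * N * g t₁ + (q₂:ℝ) * N * h t₁
          = N * ((q₁:ℝ) * g t₁ + (q₂:ℝ) * h t₁) from by ring]
      exact mul_pos hNpos hs₁
    · rw [hP₁, hP₂, show (q₁:ℝ) * N * g t₂ + (q₂:ℝ) * N * h t₂
          = N * ((q₁:ℝ) * g t₂ + (q₂:ℝ) * h t₂) from by ring]
      exact mul_neg_of_pos_of_neg hNpos hs₂
    · rw [hcombo, hP₁, hP₂]
      have : (q₁:ℝ) * N * A + (q₂:ℝ) * N * B = N * ((q₁:ℝ) * A + (q₂:ℝ) * B) := by ring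
      rw [this]
      exact mul_ne_zero (ne_of_gt hNpos) hline
  constructor
  · by_cases hAB : A = 0 ∧ B = 0
    · obtain ⟨⟨t₁, ht₁⟩, ⟨t₂, ht₂⟩⟩ := sign_change (hcomboC 1 2) (hcomboP 1 2)
        (hcomboNe 1 2 (Or.inl one_ne_zero)) (by rw [hcombo, hAB.1, hAB.2]; ring)
      refine ⟨1, 2, one_ne_zero, two_ne_zero, by norm_num, ⟨t₁, ?_⟩, ⟨t₂, ?_⟩⟩
      · push_cast; simpa using ht₁
      · push_cast; simpa using ht₂
    · obtain ⟨p₁, p₂, h1, h2, h3, h4, h5, _⟩ := main hAB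
      exact ⟨p₁, p₂, h1, h2, h3, h4, h5⟩
  · intro hyp
    apply main
    rintro ⟨hA0, hB0⟩
    rcases hyp with hA | hB
    · exact hA hA0
    · exact hB hB0
end

section
/- Let c₀ ∈ ℂ^r, d₀ ∈ ℂ^s, q ∈ ℂ. The following are equivalent: (1) there exist C, N > 0 such that |1 − e^{±2πi(⟨c₀,ξ⟩+⟨d₀,α⟩−iq)}| ≥ C(|ξ|+|ℓ|)^{−N} for all ξ ∈ ℤ^r, ℓ ∈ (½ℕ₀)^s, α ∈ (½ℤ)^s with −ℓ ≤ α ≤ ℓ, ℓ−α ∈ ℕ₀^s, ⟨c₀,ξ⟩+⟨d₀,α⟩−iq ∉ ℤ and (ξ,ℓ) ≠ 0; (2) there exist M, N' > 0 such that |τ + ⟨c₀,ξ⟩ + ⟨d₀,α⟩ − iq| ≥ M(|τ|+|ξ|+|ℓ|)^{−N'} for all τ ∈ ℤ, ξ ∈ ℤ^r, ℓ ∈ (½ℕ₀)^s, α as above with (τ,ξ,ℓ) ≠ 0 and the left-hand side nonzero. -/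
open Complex Filter Set
open scoped Real

/-!
Write `z = ⟨c₀,ξ⟩ + ⟨d₀,α⟩ − iq`. Since `e^{2πiz}` only depends on `z` modulo `ℤ`, both conditions
are statements about the distance from `z` to `ℤ`. Near an integer `n`, `1 − e^{2πiz}` is
comparable to `z − n`: it is at most `4π‖z − n‖` once `2π‖z − n‖ ≤ 1`, and conversely
`1 − e^{2πiu} = u g(u)` with `g` continuous and zero-free on the compact rectangle
`|Re u| ≤ 1/2, |Im u| ≤ 1`; for `|Im z| ≥ 1` the modulus of `e^{2πiz}` keeps `1 − e^{2πiz}` away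
from `0`. The integer `n` nearest to `Re z` has `|n| ≤ ‖z‖ + 1/2 = O(|ξ| + |ℓ|)`, so for `τ = −n`
the weights `(|τ| + |ξ| + |ℓ|)^{-N}` and `(|ξ| + |ℓ|)^{-N}` are comparable. The terms with
`(ξ, ℓ) = 0` only involve the numbers `τ − iq`, `τ ∈ ℤ`, whose nonzero values stay a positive
distance away from `0`.
-/

lemma exists_pos_le_norm_intCast_add (w : ℂ) :
    ∃ δ > (0 : ℝ), ∀ τ : ℤ, (τ : ℂ) + w ≠ 0 → δ ≤ ‖(τ : ℂ) + w‖ := by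
  have hlim : Tendsto (fun τ : ℤ => ‖(τ : ℂ) + w‖) cofinite atTop := by
    refine tendsto_atTop_mono (fun τ => ?_)
      (tendsto_atTop_add_const_right _ (-‖w‖)
        (tendsto_norm_cocompact_atTop.comp Int.tendsto_coe_cofinite))
    have := norm_sub_le ((τ : ℂ) + w) w
    simp only [add_sub_cancel_right, norm_intCast] at this
    simp only [Function.comp_apply, Real.norm_eq_abs]
    linarith
  have hne : {τ : ℤ | (τ : ℂ) + w ≠ 0}.Nonempty := by
    by_cases hw : w = 0
    · exact ⟨1, by simp [hw]⟩
    · exact ⟨0, by simpa using hw⟩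
  obtain ⟨τ₀, hτ₀, hmin⟩ := hlim.exists_within_forall_le hne
  exact ⟨_, norm_pos_iff.2 hτ₀, hmin⟩

lemma exp_two_pi_I_mul_add_intCast (z : ℂ) (n : ℤ) :
    exp (((2 * π : ℝ) : ℂ) * I * (z + n)) = exp (((2 * π : ℝ) : ℂ) * I * z) := by
  push_cast
  rw [mul_add, exp_add, mul_comm _ (n : ℂ), exp_int_mul_two_pi_mul_I, mul_one]

lemma norm_one_sub_exp_le {z : ℂ} {τ : ℤ} (h : 2 * π * ‖(τ : ℂ) + z‖ ≤ 1) :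
    ‖1 - exp (((2 * π : ℝ) : ℂ) * I * z)‖ ≤ 4 * π * ‖(τ : ℂ) + z‖ := by
  have hnorm : ‖((2 * π : ℝ) : ℂ) * I * (z + τ)‖ = 2 * π * ‖(τ : ℂ) + z‖ := by
    rw [norm_mul, norm_mul, norm_I, norm_real, Real.norm_of_nonneg (by positivity), add_comm,
      mul_one]
  rw [← exp_two_pi_I_mul_add_intCast z τ, norm_sub_rev]
  calc _ ≤ 2 * ‖((2 * π : ℝ) : ℂ) * I * (z + τ)‖ := norm_exp_sub_one_le (hnorm ▸ h)
    _ = _ := by rw [hnorm]; ring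

lemma half_le_abs_one_sub_exp {t : ℝ} (ht : 1 ≤ |t|) : 1 / 2 ≤ |1 - Real.exp t| := by
  rcases le_abs'.1 ht with ht | ht
  · have : Real.exp t ≤ 1 / 2 := by
      rw [← neg_neg t, Real.exp_neg, one_div]
      gcongr
      linarith [Real.add_one_le_exp (-t)]
    rw [abs_of_pos (by linarith)]
    linarith
  · have := Real.add_one_le_exp t
    rw [abs_of_neg (by linarith)]
    linarith

lemma half_le_norm_one_sub_exp {z : ℂ} (h : 1 ≤ |z.im|) :
    1 / 2 ≤ ‖1 - exp (((2 * π : ℝ) : ℂ) * I * z)‖ := by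
  have hre : (((2 * π : ℝ) : ℂ) * I * z).re = -(2 * π * z.im) := by simp
  calc (1 : ℝ) / 2 ≤ |1 - Real.exp (-(2 * π * z.im))| := by
        refine half_le_abs_one_sub_exp ?_
        rw [abs_neg, abs_mul, abs_of_pos (by positivity)]
        nlinarith [Real.pi_gt_three]
    _ = |‖(1 : ℂ)‖ - ‖exp (((2 * π : ℝ) : ℂ) * I * z)‖| := by rw [norm_exp, hre, norm_one]
    _ ≤ _ := abs_norm_sub_norm_le _ _

lemma exists_pos_mul_norm_le_norm_one_sub_exp :
    ∃ m > (0 : ℝ), ∀ u : ℂ, |u.re| ≤ 1 / 2 → |u.im| ≤ 1 →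
      m * ‖u‖ ≤ ‖1 - exp (((2 * π : ℝ) : ℂ) * I * u)‖ := by
  set f : ℂ → ℂ := fun u => 1 - exp (((2 * π : ℝ) : ℂ) * I * u)
  have hf : HasDerivAt f (-(((2 * π : ℝ) : ℂ) * I)) 0 := by
    simpa [f] using ((hasDerivAt_id (0 : ℂ)).const_mul (((2 * π : ℝ) : ℂ) * I)).cexp.const_sub 1
  have hfg : ∀ u, f u = u * dslope f 0 u := fun u => by
    simpa [f] using (sub_smul_dslope f 0 u).symm
  have hg : Continuous (dslope f 0) := continuousOn_univ.1 <|
    ((differentiableOn_dslope univ_mem).2 (by fun_prop)).continuousOn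
  set K := Icc (-(1 / 2) : ℝ) (1 / 2) ×ℂ Icc (-1 : ℝ) 1
  have hK : IsCompact K := isCompact_Icc.reProdIm isCompact_Icc
  have hg0 : ∀ u ∈ K, dslope f 0 u ≠ 0 := by
    intro u hu hgu
    rcases eq_or_ne u 0 with rfl | hu0
    · rw [dslope_same, hf.deriv] at hgu
      simp [Real.pi_ne_zero] at hgu
    obtain ⟨n, hn⟩ := exp_eq_one_iff.1 (sub_eq_zero.1 (by simpa [hgu] using hfg u)).symm
    have hun : u = n := by
      have : (2 * π * I : ℂ) ≠ 0 := by simp [Real.pi_ne_zero]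
      push_cast at hn
      exact mul_left_cancel₀ this (by linear_combination hn)
    have hn0 : n = 0 := by
      have h := abs_le.2 hu.1
      rw [hun, intCast_re] at h
      by_contra hn0
      have : (1 : ℝ) ≤ |(n : ℝ)| := by exact_mod_cast Int.one_le_abs hn0
      linarith
    exact hu0 (by simp [hun, hn0])
  obtain ⟨u₀, hu₀, hmin⟩ := hK.exists_isMinOn ⟨0, by simp [K, mem_reProdIm]⟩ hg.norm.continuousOn
  refine ⟨‖dslope f 0 u₀‖, norm_pos_iff.2 (hg0 u₀ hu₀), fun u hre him => ?_⟩
  calc ‖dslope f 0 u₀‖ * ‖u‖ ≤ ‖dslope f 0 u‖ * ‖u‖ := by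
        gcongr; exact hmin ⟨abs_le.1 hre, abs_le.1 him⟩
    _ = ‖f u‖ := by rw [hfg, norm_mul, mul_comm]

lemma exists_pos_mul_min_le_norm_one_sub_exp :
    ∃ m > (0 : ℝ), ∀ z : ℂ,
      m * min 1 ‖z - round z.re‖ ≤ ‖1 - exp (((2 * π : ℝ) : ℂ) * I * z)‖ := by
  obtain ⟨m, hm, hmu⟩ := exists_pos_mul_norm_le_norm_one_sub_exp
  refine ⟨min m (1 / 2), by positivity, fun z => ?_⟩
  rcases le_or_gt 1 |z.im| with him | him
  · calc min m (1 / 2) * min 1 ‖z - round z.re‖ ≤ 1 / 2 * 1 := by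
          gcongr <;> first | exact min_le_right .. | exact min_le_left ..
      _ ≤ _ := by simpa using half_le_norm_one_sub_exp him
  · set u := z - round z.re
    have hre : |u.re| ≤ 1 / 2 := by simpa [u] using abs_sub_round z.re
    have him' : |u.im| ≤ 1 := by simpa [u] using him.le
    calc min m (1 / 2) * min 1 ‖u‖ ≤ m * ‖u‖ := by
          gcongr <;> first | exact min_le_right .. | exact min_le_left ..
      _ ≤ _ := hmu u hre him'
      _ = _ := by rw [← exp_two_pi_I_mul_add_intCast u (round z.re), sub_add_cancel]

lemma two_rpow_neg_mul_rpow_neg_le_one {B N : ℝ} (hB : 1 / 2 ≤ B) (hN : 0 ≤ N) :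
    (2 : ℝ) ^ (-N) * B ^ (-N) ≤ 1 := by
  rw [← Real.mul_rpow (by norm_num) (by linarith)]
  exact Real.rpow_le_one_of_one_le_of_nonpos (by linarith) (by linarith)

lemma mul_rpow_neg_le_of_le {a x B N : ℝ} (ha : 0 ≤ a) (hN : 0 ≤ N) (hB : 1 ≤ B) (h : a ≤ x) :
    a * B ^ (-N) ≤ x :=
  (mul_le_of_le_one_right ha (Real.rpow_le_one_of_one_le_of_nonpos hB (by linarith))).trans h

lemma abs_round_le (x : ℝ) : |(round x : ℝ)| ≤ |x| + 1 / 2 := by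
  have := abs_sub_abs_le_abs_sub (round x : ℝ) x
  rw [abs_sub_comm] at this
  linarith [abs_sub_round x]

lemma min_div_mul_rpow_neg_le_norm_intCast_add {z : ℂ} {C N S : ℝ} (hC : 0 ≤ C) (hN : 0 ≤ N)
    (hS : 1 / 2 ≤ S)
    (H : z ∉ range ((↑) : ℤ → ℂ) → C * S ^ (-N) ≤ ‖1 - exp (((2 * π : ℝ) : ℂ) * I * z)‖)
    {τ : ℤ} (hτ : (τ : ℂ) + z ≠ 0) :
    min C (2 ^ (-N)) / (4 * π) * (|(τ : ℝ)| + S) ^ (-N) ≤ ‖(τ : ℂ) + z‖ := by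
  have hSB : S ≤ |(τ : ℝ)| + S := le_add_of_nonneg_left (abs_nonneg _)
  have hsmall : min C (2 ^ (-N)) / (4 * π) * (|(τ : ℝ)| + S) ^ (-N) ≤ 1 / (4 * π) := by
    rw [div_mul_eq_mul_div]
    gcongr
    exact (mul_le_mul_of_nonneg_right (min_le_right _ _) (by positivity)).trans
      (two_rpow_neg_mul_rpow_neg_le_one (hS.trans hSB) hN)
  have hπ : 1 / (4 * π) ≤ 1 / (2 * π) := by gcongr; linarith
  by_cases hz : z ∈ range ((↑) : ℤ → ℂ)
  · obtain ⟨n, rfl⟩ := hz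
    have hτn : τ + n ≠ 0 := by exact_mod_cast hτ
    have : (1 : ℝ) ≤ ‖((τ : ℤ) : ℂ) + n‖ := by
      rw [← Int.cast_add, norm_intCast]
      exact_mod_cast Int.one_le_abs hτn
    have : 1 / (2 * π) ≤ 1 := by
      rw [div_le_one (by positivity)]; linarith [Real.pi_gt_three]
    linarith
  by_cases hd : 2 * π * ‖(τ : ℂ) + z‖ ≤ 1
  · calc min C (2 ^ (-N)) / (4 * π) * (|(τ : ℝ)| + S) ^ (-N) ≤ C / (4 * π) * S ^ (-N) :=
          mul_le_mul (by gcongr; exact min_le_left _ _)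
            (Real.rpow_le_rpow_of_nonpos (by linarith) hSB (by linarith)) (by positivity)
            (by positivity)
      _ ≤ ‖1 - exp (((2 * π : ℝ) : ℂ) * I * z)‖ / (4 * π) := by
          rw [div_mul_eq_mul_div]; gcongr; exact H hz
      _ ≤ ‖(τ : ℂ) + z‖ := by
          rw [div_le_iff₀' (by positivity)]; exact norm_one_sub_exp_le hd
  · have : 1 / (2 * π) < ‖(τ : ℂ) + z‖ := by
      rw [div_lt_iff₀ (by positivity)]; linarith
    linarith

lemma min_mul_rpow_neg_le_min_one_norm_sub_round {z : ℂ} {M N K b S : ℝ} (hM : 0 ≤ M)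
    (hN : 0 ≤ N) (hK : 0 ≤ K) (hb : 0 ≤ b) (hS : 1 / 2 ≤ S) (hz : ‖z‖ ≤ K * S + b)
    (H : ∀ τ : ℤ, (τ : ℂ) + z ≠ 0 → M * (|(τ : ℝ)| + S) ^ (-N) ≤ ‖(τ : ℂ) + z‖)
    (hzint : z ∉ range ((↑) : ℤ → ℂ)) :
    min (2 ^ (-N)) (M * (K + 2 * b + 2) ^ (-N)) * S ^ (-N) ≤ min 1 ‖z - round z.re‖ := by
  have hτz : ((-round z.re : ℤ) : ℂ) + z = z - round z.re := by push_cast; ring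
  have hne : ((-round z.re : ℤ) : ℂ) + z ≠ 0 := by
    rw [hτz, sub_ne_zero]; exact fun h => hzint ⟨_, h.symm⟩
  have hB : |((-round z.re : ℤ) : ℝ)| + S ≤ (K + 2 * b + 2) * S := by
    have := abs_round_le z.re
    have := abs_re_le_norm z
    push_cast
    rw [abs_neg]
    nlinarith
  refine le_min ?_ ?_
  · exact (mul_le_mul_of_nonneg_right (min_le_left _ _) (by positivity)).trans
      (two_rpow_neg_mul_rpow_neg_le_one hS hN)
  · calc min (2 ^ (-N)) (M * (K + 2 * b + 2) ^ (-N)) * S ^ (-N)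
        ≤ M * ((K + 2 * b + 2) * S) ^ (-N) := by
          rw [Real.mul_rpow (by positivity) (by linarith), ← mul_assoc]
          gcongr
          exact min_le_right _ _
      _ ≤ M * (|((-round z.re : ℤ) : ℝ)| + S) ^ (-N) :=
          mul_le_mul_of_nonneg_left (Real.rpow_le_rpow_of_nonpos
            (add_pos_of_nonneg_of_pos (abs_nonneg _) (by linarith)) hB (by linarith)) hM
      _ ≤ ‖z - round z.re‖ := hτz ▸ H _ hne

lemma mul_min_mul_rpow_neg_le_norm_one_sub_exp {z : ℂ} {m M N K b S : ℝ} (hm : 0 ≤ m)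
    (hexp : ∀ w : ℂ, m * min 1 ‖w - round w.re‖ ≤ ‖1 - exp (((2 * π : ℝ) : ℂ) * I * w)‖)
    (hM : 0 ≤ M) (hN : 0 ≤ N) (hK : 0 ≤ K) (hb : 0 ≤ b) (hS : 1 / 2 ≤ S)
    (hz : ‖z‖ ≤ K * S + b)
    (H : ∀ τ : ℤ, (τ : ℂ) + z ≠ 0 → M * (|(τ : ℝ)| + S) ^ (-N) ≤ ‖(τ : ℂ) + z‖)
    (hzint : z ∉ range ((↑) : ℤ → ℂ)) :
    m * min (2 ^ (-N)) (M * (K + 2 * b + 2) ^ (-N)) * S ^ (-N) ≤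
        ‖1 - exp (((2 * π : ℝ) : ℂ) * I * z)‖ ∧
      m * min (2 ^ (-N)) (M * (K + 2 * b + 2) ^ (-N)) * S ^ (-N) ≤
        ‖1 - exp (-(((2 * π : ℝ) : ℂ) * I) * z)‖ := by
  have key : ∀ w : ℂ, ‖w‖ ≤ K * S + b →
      (∀ τ : ℤ, (τ : ℂ) + w ≠ 0 → M * (|(τ : ℝ)| + S) ^ (-N) ≤ ‖(τ : ℂ) + w‖) →
      w ∉ range ((↑) : ℤ → ℂ) →
      m * min (2 ^ (-N)) (M * (K + 2 * b + 2) ^ (-N)) * S ^ (-N) ≤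
        ‖1 - exp (((2 * π : ℝ) : ℂ) * I * w)‖ := fun w hw Hw hwint => by
    rw [mul_assoc]
    exact (mul_le_mul_of_nonneg_left
      (min_mul_rpow_neg_le_min_one_norm_sub_round hM hN hK hb hS hw Hw hwint) hm).trans (hexp w)
  refine ⟨key z hz H hzint, ?_⟩
  rw [neg_mul, ← mul_neg]
  refine key (-z) (by rwa [norm_neg]) (fun τ hτ => ?_)
    (fun ⟨n, hn⟩ => hzint ⟨-n, by rw [Int.cast_neg, hn, neg_neg]⟩)
  have hτ' : ((-τ : ℤ) : ℂ) + z = -((τ : ℂ) + -z) := by push_cast; ring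
  have := H (-τ) (by rw [hτ']; exact neg_ne_zero.2 hτ)
  rwa [hτ', norm_neg, Int.cast_neg, abs_neg] at this

section Fintype
variable {ι κ : Type*} [Fintype ι] [Fintype κ]

lemma half_le_sum_abs_add_sum_half {ξ : ι → ℤ} {ℓ : κ → ℕ} (h : ¬(ξ = 0 ∧ ℓ = 0)) :
    1 / 2 ≤ ((∑ j, |ξ j| : ℤ) : ℝ) + ∑ k, (ℓ k : ℝ) / 2 := by
  have hT : (0 : ℝ) ≤ ((∑ j, |ξ j| : ℤ) : ℝ) := by positivity
  have hL : (0 : ℝ) ≤ ∑ k, (ℓ k : ℝ) / 2 := by positivity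
  rcases not_and_or.1 h with h | h
  · obtain ⟨j, hj⟩ := Function.ne_iff.1 h
    have : (1 : ℤ) ≤ ∑ j, |ξ j| :=
      (Int.one_le_abs hj).trans
        (Finset.single_le_sum (fun i _ => abs_nonneg (ξ i)) (Finset.mem_univ j))
    have : (1 : ℝ) ≤ ((∑ j, |ξ j| : ℤ) : ℝ) := by exact_mod_cast this
    linarith
  · obtain ⟨k, hk⟩ := Function.ne_iff.1 h
    have : (1 : ℝ) ≤ ℓ k := by exact_mod_cast Nat.one_le_iff_ne_zero.2 hk
    have : (ℓ k : ℝ) / 2 ≤ ∑ k, (ℓ k : ℝ) / 2 :=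
      Finset.single_le_sum (f := fun k => (ℓ k : ℝ) / 2) (fun i _ => by positivity)
        (Finset.mem_univ k)
    linarith

lemma norm_sum_mul_le (c v : ι → ℂ) {T : ℝ} (h : ∀ j, ‖v j‖ ≤ T) :
    ‖∑ j, c j * v j‖ ≤ (∑ j, ‖c j‖) * T :=
  calc ‖∑ j, c j * v j‖ ≤ ∑ j, ‖c j * v j‖ := norm_sum_le _ _
    _ = ∑ j, ‖c j‖ * ‖v j‖ := by simp only [norm_mul]
    _ ≤ ∑ j, ‖c j‖ * T := by gcongr with j; exact h j
    _ = (∑ j, ‖c j‖) * T := (Finset.sum_mul ..).symm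

lemma norm_sum_mul_add_sum_mul_sub_le (c₀ : ι → ℂ) (d₀ : κ → ℂ) (q : ℂ) {ξ : ι → ℤ} {ℓ : κ → ℕ}
    {α : κ → ℤ} (hα : ∀ k, |α k| ≤ ℓ k) :
    ‖(∑ j, c₀ j * (ξ j : ℂ)) + (∑ k, d₀ k * ((α k : ℂ) / 2)) - I * q‖ ≤
      (∑ j, ‖c₀ j‖ + ∑ k, ‖d₀ k‖) * (((∑ j, |ξ j| : ℤ) : ℝ) + ∑ k, (ℓ k : ℝ) / 2) + ‖q‖ := by
  have hξ : ‖∑ j, c₀ j * (ξ j : ℂ)‖ ≤ (∑ j, ‖c₀ j‖) * ((∑ j, |ξ j| : ℤ) : ℝ) := by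
    refine norm_sum_mul_le _ _ fun j => ?_
    rw [norm_intCast]
    exact_mod_cast Finset.single_le_sum (fun i _ => abs_nonneg (ξ i)) (Finset.mem_univ j)
  have hα : ‖∑ k, d₀ k * ((α k : ℂ) / 2)‖ ≤ (∑ k, ‖d₀ k‖) * ∑ k, (ℓ k : ℝ) / 2 := by
    refine norm_sum_mul_le _ _ fun k => ?_
    have : |(α k : ℝ)| ≤ ℓ k := by exact_mod_cast hα k
    calc ‖(α k : ℂ) / 2‖ = |(α k : ℝ)| / 2 := by simp
      _ ≤ (ℓ k : ℝ) / 2 := by gcongr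
      _ ≤ ∑ k, (ℓ k : ℝ) / 2 := Finset.single_le_sum (f := fun k => (ℓ k : ℝ) / 2)
          (fun i _ => by positivity) (Finset.mem_univ k)
  calc _ ≤ ‖∑ j, c₀ j * (ξ j : ℂ)‖ + ‖∑ k, d₀ k * ((α k : ℂ) / 2)‖ + ‖I * q‖ :=
        (norm_sub_le _ _).trans (by gcongr; exact norm_add_le _ _)
    _ ≤ _ := by
      rw [norm_mul, norm_I, one_mul]
      have : 0 ≤ ∑ j, ‖c₀ j‖ := by positivity
      have : 0 ≤ ∑ k, ‖d₀ k‖ := by positivity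
      have : (0 : ℝ) ≤ ((∑ j, |ξ j| : ℤ) : ℝ) := by positivity
      have : (0 : ℝ) ≤ ∑ k, (ℓ k : ℝ) / 2 := by positivity
      nlinarith

lemma sum_mul_add_sum_mul_sub_eq_of_eq_zero (c₀ : ι → ℂ) (d₀ : κ → ℂ) (q : ℂ) {ξ : ι → ℤ}
    {ℓ : κ → ℕ} {α : κ → ℤ} (hα : ∀ k, |α k| ≤ ℓ k) (h : ξ = 0 ∧ ℓ = 0) :
    (∑ j, c₀ j * (ξ j : ℂ)) + (∑ k, d₀ k * ((α k : ℂ) / 2)) - I * q = -(I * q) ∧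
      ((∑ j, |ξ j| : ℤ) : ℝ) + ∑ k, (ℓ k : ℝ) / 2 = 0 := by
  obtain ⟨rfl, rfl⟩ := h
  obtain rfl : α = 0 := funext fun k => abs_nonpos_iff.1 (by simpa using hα k)
  simp

end Fintype

/-- `ℓ` and `α` are the doubles of the paper's half-integer multi-indices, so `ℓ − α ∈ ℕ₀^s` reads
`2 ∣ ℓ k - α k`. -/
theorem stmt13 {r s : ℕ} (c₀ : Fin r → ℂ) (d₀ : Fin s → ℂ) (q : ℂ) :
    (∃ C > (0:ℝ), ∃ N > (0:ℝ),
      ∀ (ξ : Fin r → ℤ) (ℓ : Fin s → ℕ) (α : Fin s → ℤ),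
        (∀ k, -(ℓ k : ℤ) ≤ α k) → (∀ k, α k ≤ (ℓ k : ℤ)) →
        (∀ k, (2:ℤ) ∣ ((ℓ k : ℤ) - α k)) →
        ((∑ j, c₀ j * (ξ j : ℂ)) + (∑ k, d₀ k * ((α k : ℂ) / 2)) - Complex.I * q ∉
          Set.range ((↑·) : ℤ → ℂ)) →
        ¬(ξ = 0 ∧ ℓ = 0) →
        (C * (((∑ j, |ξ j| : ℤ) : ℝ) + ∑ k, (ℓ k : ℝ) / 2) ^ (-N) ≤
          ‖1 - Complex.exp ((2 * Real.pi : ℝ) * Complex.I *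
            ((∑ j, c₀ j * (ξ j : ℂ)) + (∑ k, d₀ k * ((α k : ℂ) / 2)) - Complex.I * q))‖ ∧
         C * (((∑ j, |ξ j| : ℤ) : ℝ) + ∑ k, (ℓ k : ℝ) / 2) ^ (-N) ≤
          ‖1 - Complex.exp (-((2 * Real.pi : ℝ) * Complex.I) *
            ((∑ j, c₀ j * (ξ j : ℂ)) + (∑ k, d₀ k * ((α k : ℂ) / 2)) - Complex.I * q))‖)) ↔
    (∃ M > (0:ℝ), ∃ N' > (0:ℝ),
      ∀ (τ : ℤ) (ξ : Fin r → ℤ) (ℓ : Fin s → ℕ) (α : Fin s → ℤ),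
        (∀ k, -(ℓ k : ℤ) ≤ α k) → (∀ k, α k ≤ (ℓ k : ℤ)) →
        (∀ k, (2:ℤ) ∣ ((ℓ k : ℤ) - α k)) →
        ¬(τ = 0 ∧ ξ = 0 ∧ ℓ = 0) →
        (τ : ℂ) + (∑ j, c₀ j * (ξ j : ℂ)) + (∑ k, d₀ k * ((α k : ℂ) / 2)) -
          Complex.I * q ≠ 0 →
        M * ((|τ| : ℝ) + ((∑ j, |ξ j| : ℤ) : ℝ) + ∑ k, (ℓ k : ℝ) / 2) ^ (-N') ≤
          ‖(τ : ℂ) + (∑ j, c₀ j * (ξ j : ℂ)) +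
            (∑ k, d₀ k * ((α k : ℂ) / 2)) - Complex.I * q‖) := by
  have hsum : ∀ (τ : ℤ) (ξ : Fin r → ℤ) (α : Fin s → ℤ), (τ : ℂ) + (∑ j, c₀ j * (ξ j : ℂ)) +
      (∑ k, d₀ k * ((α k : ℂ) / 2)) - I * q =
        τ + ((∑ j, c₀ j * (ξ j : ℂ)) + (∑ k, d₀ k * ((α k : ℂ) / 2)) - I * q) := by
    intros; ring
  constructor
  · rintro ⟨C, hC, N, hN, H⟩
    obtain ⟨δ, hδ, hδq⟩ := exists_pos_le_norm_intCast_add (-(I * q))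
    refine ⟨min δ (min C (2 ^ (-N)) / (4 * π)), by positivity, N, hN, ?_⟩
    intro τ ξ ℓ α hα₁ hα₂ hdiv h0 hτz
    rw [hsum] at hτz ⊢
    rw [add_assoc]
    by_cases hξℓ : ξ = 0 ∧ ℓ = 0
    · obtain ⟨hz, hS⟩ := sum_mul_add_sum_mul_sub_eq_of_eq_zero c₀ d₀ q
        (fun k => abs_le.2 ⟨hα₁ k, hα₂ k⟩) hξℓ
      rw [hz] at hτz ⊢
      rw [hS, add_zero]
      exact (mul_le_mul_of_nonneg_right (min_le_left _ _) (by positivity)).trans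
        (mul_rpow_neg_le_of_le hδ.le hN.le
          (by exact_mod_cast Int.one_le_abs fun h => h0 ⟨h, hξℓ⟩) (hδq τ hτz))
    · exact (mul_le_mul_of_nonneg_right (min_le_right _ _) (by positivity)).trans
        (min_div_mul_rpow_neg_le_norm_intCast_add hC.le hN.le (half_le_sum_abs_add_sum_half hξℓ)
          (fun hz => (H ξ ℓ α hα₁ hα₂ hdiv hz hξℓ).1) hτz)
  · rintro ⟨M, hM, N, hN, H⟩
    obtain ⟨m, hm, hexp⟩ := exists_pos_mul_min_le_norm_one_sub_exp
    refine ⟨m * min (2 ^ (-N)) (M * (∑ j, ‖c₀ j‖ + ∑ k, ‖d₀ k‖ + 2 * ‖q‖ + 2) ^ (-N)),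
      by positivity, N, hN, fun ξ ℓ α hα₁ hα₂ hdiv hzint hξℓ => ?_⟩
    refine mul_min_mul_rpow_neg_le_norm_one_sub_exp hm.le hexp hM.le hN.le (by positivity)
      (norm_nonneg q) (half_le_sum_abs_add_sum_half hξℓ)
      (norm_sum_mul_add_sum_mul_sub_le c₀ d₀ q fun k => abs_le.2 ⟨hα₁ k, hα₂ k⟩)
      (fun τ hτ => ?_) hzint
    have := H τ ξ ℓ α hα₁ hα₂ hdiv (fun h => hξℓ h.2) (by rwa [hsum])
    rwa [hsum, add_assoc] at this
end
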